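/- Under the setup of the two-layer GNN error bound, the intermediate comparison satisfies: with Z̃ := Φ(X; A*, Θ) (true features, ideal graph), ‖Z* - Z̃‖_F ≤ ρ₁ρ₂ · α√N, where Z* = Φ(X*; A*, Θ), ρ₁ = ‖Θ⁽¹⁾‖₂, ρ₂ = ‖Θ⁽²⁾‖₂, and max_i ‖(X* - X)_{i,:}‖₂ ≤ α. -/

import Mathlib

open scoped Matrix.Norms.L2Operator

/-- Frobenius norm of a real matrix. -/
noncomputable def frob {n m : ℕ} (A : Matrix (Fin n) (Fin m) ℝ) : ℝ :=
  Real.sqrt (∑ i, ∑ j, (A i j) ^ 2)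

/-- Spectral (ℓ2 operator) norm of a real matrix. -/
noncomputable def specNorm {n m : ℕ} (A : Matrix (Fin n) (Fin m) ℝ) : ℝ := ‖A‖

/-- Euclidean norm of the `i`-th row of a matrix. -/
noncomputable def rowNorm {n m : ℕ} (A : Matrix (Fin n) (Fin m) ℝ) (i : Fin n) : ℝ :=
  Real.sqrt (∑ j, (A i j) ^ 2)

/-- Row-normalized adjacency matrix with self-loops: `D⁻¹ (A + I)`. -/
noncomputable def rowNormalize {n : ℕ} (A : Matrix (Fin n) (Fin n) ℝ) :
    Matrix (Fin n) (Fin n) ℝ :=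
  Matrix.of fun i j =>
    (A i j + if i = j then 1 else 0) / (∑ k, (A i k + if i = k then 1 else 0))

/-- A matrix `U` recovers the labels `y` if each row is a class-representative vector and
distinct classes have distinct representatives. -/
def Recovers {N P C : ℕ} (U : Matrix (Fin N) (Fin P) ℝ) (y : Fin N → Fin C) : Prop :=
  ∃ u : Fin C → (Fin P → ℝ), (∀ i, U i = u (y i)) ∧ Function.Injective u

/-- Two-layer GNN `Φ(X; A, Θ) = σ₂(Â_rw σ₁(Â_rw X Θ¹) Θ²)`. -/
noncomputable def Phi {N M M₁ M₂ : ℕ} (σ₁ σ₂ : ℝ → ℝ)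
    (X : Matrix (Fin N) (Fin M) ℝ) (A : Matrix (Fin N) (Fin N) ℝ)
    (Θ₁ : Matrix (Fin M) (Fin M₁) ℝ) (Θ₂ : Matrix (Fin M₁) (Fin M₂) ℝ) :
    Matrix (Fin N) (Fin M₂) ℝ :=
  ((rowNormalize A * ((rowNormalize A * X * Θ₁).map σ₁)) * Θ₂).map σ₂

/-- Idealized features: row `i` is the mean feature vector of the class of node `i`. -/
noncomputable def classMean {N M C : ℕ} (y : Fin N → Fin C)
    (X : Matrix (Fin N) (Fin M) ℝ) : Matrix (Fin N) (Fin M) ℝ :=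
  Matrix.of fun i k =>
    (∑ j ∈ Finset.univ.filter fun j => y j = y i, X j k) /
      ((Finset.univ.filter fun j => y j = y i).card : ℝ)

/-- Idealized adjacency: zero out all edges between nodes of different classes. -/
def idealAdj {N C : ℕ} (y : Fin N → Fin C) (A : Matrix (Fin N) (Fin N) ℝ) :
    Matrix (Fin N) (Fin N) ℝ :=
  Matrix.of fun i j => if y i = y j then A i j else 0

/-!
The argument works row by row: if every row of `Y - Y'` has Euclidean norm at most `β`, then
so does every row of `P (Y - Y')` for row-stochastic `P`, every row of `(Y - Y') Θ` has norm at
most `‖Θ‖₂ β`, and applying a 1-Lipschitz `σ` entrywise does not increase row norms. Two layers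
give the row bound `ρ₁ ρ₂ α`, and summing `N` rows gives the factor `√N` in the Frobenius norm.
-/

open Matrix

lemma rowNorm_eq_norm {n m : ℕ} (A : Matrix (Fin n) (Fin m) ℝ) (i : Fin n) :
    rowNorm A i = ‖WithLp.toLp 2 (A i)‖ := by
  simp [rowNorm, EuclideanSpace.norm_eq, sq_abs]

lemma rowNorm_mul_le_of_mem_rowStochastic {n m : ℕ} {P : Matrix (Fin n) (Fin n) ℝ}
    (hP : P ∈ rowStochastic ℝ (Fin n)) {D : Matrix (Fin n) (Fin m) ℝ} {β : ℝ}
    (hD : ∀ k, rowNorm D k ≤ β) (i : Fin n) : rowNorm (P * D) i ≤ β := by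
  have hrow : WithLp.toLp 2 ((P * D) i) = ∑ k, P i k • WithLp.toLp 2 (D k) := by
    ext j
    simp [Matrix.mul_apply]
  -- row `i` of `P * D` is a convex combination of the rows of `D`
  have hball : WithLp.toLp 2 ((P * D) i) ∈ Metric.closedBall (0 : EuclideanSpace ℝ (Fin m)) β := by
    rw [hrow]
    exact (convex_closedBall 0 β).sum_mem (fun k _ => nonneg_of_mem_rowStochastic hP)
      (sum_row_of_mem_rowStochastic hP i) fun k _ => by simpa [rowNorm_eq_norm] using hD k
  simpa [rowNorm_eq_norm] using hball

lemma rowNorm_mul_le {n m p : ℕ} (D : Matrix (Fin n) (Fin m) ℝ) (Θ : Matrix (Fin m) (Fin p) ℝ)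
    (i : Fin n) : rowNorm (D * Θ) i ≤ ‖Θ‖ * rowNorm D i := by
  have hrow : WithLp.toLp 2 ((D * Θ) i) = (EuclideanSpace.equiv (Fin p) ℝ).symm (Θᵀ *ᵥ D i) := by
    ext j
    simp [Matrix.mul_apply, Matrix.mulVec, dotProduct, mul_comm]
  rw [rowNorm_eq_norm, rowNorm_eq_norm, hrow, ← l2_opNorm_conjTranspose Θ,
    conjTranspose_eq_transpose_of_trivial]
  exact l2_opNorm_mulVec Θᵀ _

lemma rowNorm_map_sub_map_le {n m : ℕ} {σ : ℝ → ℝ} (hσ : LipschitzWith 1 σ)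
    (Y Y' : Matrix (Fin n) (Fin m) ℝ) (i : Fin n) :
    rowNorm (Y.map σ - Y'.map σ) i ≤ rowNorm (Y - Y') i := by
  refine Real.sqrt_le_sqrt (Finset.sum_le_sum fun j _ => ?_)
  have h := hσ.dist_le_mul (Y i j) (Y' i j)
  simp only [NNReal.coe_one, one_mul, Real.dist_eq] at h
  simpa only [Matrix.sub_apply, map_apply] using sq_le_sq.2 h

lemma frob_le_mul_sqrt_of_rowNorm_le {n m : ℕ} {Z : Matrix (Fin n) (Fin m) ℝ} {β : ℝ}
    (hβ : 0 ≤ β) (h : ∀ i, rowNorm Z i ≤ β) : frob Z ≤ β * Real.sqrt n := by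
  have hrow : ∀ i, ∑ j, Z i j ^ 2 ≤ β ^ 2 := fun i =>
    (Real.sqrt_le_left hβ).1 (h i)
  calc frob Z ≤ Real.sqrt (∑ _i : Fin n, β ^ 2) :=
        Real.sqrt_le_sqrt (Finset.sum_le_sum fun i _ => hrow i)
    _ = β * Real.sqrt n := by
        simp [Real.sqrt_sq hβ, mul_comm]

noncomputable def gcnLayer {n m p : ℕ} (σ : ℝ → ℝ) (P : Matrix (Fin n) (Fin n) ℝ)
    (Θ : Matrix (Fin m) (Fin p) ℝ) (Y : Matrix (Fin n) (Fin m) ℝ) : Matrix (Fin n) (Fin p) ℝ :=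
  (P * Y * Θ).map σ

lemma Phi_eq_gcnLayer {N M M₁ M₂ : ℕ} (σ₁ σ₂ : ℝ → ℝ) (X : Matrix (Fin N) (Fin M) ℝ)
    (A : Matrix (Fin N) (Fin N) ℝ) (Θ₁ : Matrix (Fin M) (Fin M₁) ℝ)
    (Θ₂ : Matrix (Fin M₁) (Fin M₂) ℝ) :
    Phi σ₁ σ₂ X A Θ₁ Θ₂ =
      gcnLayer σ₂ (rowNormalize A) Θ₂ (gcnLayer σ₁ (rowNormalize A) Θ₁ X) :=
  rfl

lemma rowNorm_gcnLayer_sub_le {n m p : ℕ} {σ : ℝ → ℝ} (hσ : LipschitzWith 1 σ)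
    {P : Matrix (Fin n) (Fin n) ℝ} (hP : P ∈ rowStochastic ℝ (Fin n))
    (Θ : Matrix (Fin m) (Fin p) ℝ) {Y Y' : Matrix (Fin n) (Fin m) ℝ} {β : ℝ}
    (hY : ∀ k, rowNorm (Y - Y') k ≤ β) (i : Fin n) :
    rowNorm (gcnLayer σ P Θ Y - gcnLayer σ P Θ Y') i ≤ ‖Θ‖ * β :=
  calc rowNorm (gcnLayer σ P Θ Y - gcnLayer σ P Θ Y') i
      ≤ rowNorm (P * (Y - Y') * Θ) i := by
        rw [gcnLayer, gcnLayer, Matrix.mul_sub, Matrix.sub_mul]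
        exact rowNorm_map_sub_map_le hσ _ _ i
    _ ≤ ‖Θ‖ * rowNorm (P * (Y - Y')) i := rowNorm_mul_le _ Θ i
    _ ≤ ‖Θ‖ * β := by
        gcongr
        exact rowNorm_mul_le_of_mem_rowStochastic hP hY i

lemma rowNormalize_mem_rowStochastic {n : ℕ} {A : Matrix (Fin n) (Fin n) ℝ}
    (hA : ∀ i j, 0 ≤ A i j) : rowNormalize A ∈ rowStochastic ℝ (Fin n) := by
  have hentry : ∀ i j, 0 ≤ A i j + if i = j then (1 : ℝ) else 0 := fun i j => by
    have := hA i j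
    split_ifs <;> linarith
  -- the self-loop makes every degree at least 1
  have hdeg : ∀ i, 0 < ∑ k, (A i k + if i = k then (1 : ℝ) else 0) := fun i =>
    lt_of_lt_of_le (by simpa using add_pos_of_nonneg_of_pos (hA i i) one_pos)
      (Finset.single_le_sum (fun k _ => hentry i k) (Finset.mem_univ i))
  refine mem_rowStochastic_iff_sum.2 ⟨fun i j => div_nonneg (hentry i j) (hdeg i).le, fun i => ?_⟩
  simp only [rowNormalize, of_apply]
  rw [← Finset.sum_div, div_self (hdeg i).ne']

lemma idealAdj_nonneg {N C : ℕ} {y : Fin N → Fin C} {A : Matrix (Fin N) (Fin N) ℝ}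
    (hA : ∀ i j, 0 ≤ A i j) (i j : Fin N) : 0 ≤ idealAdj y A i j := by
  simp only [idealAdj, of_apply]
  split_ifs
  exacts [hA i j, le_rfl]

theorem two_layer_gnn_feature_noise_bound_general (N M M₁ M₂ C : ℕ) (y : Fin N → Fin C)
    (A : Matrix (Fin N) (Fin N) ℝ) (hA : ∀ i j, 0 ≤ A i j)
    (X : Matrix (Fin N) (Fin M) ℝ)
    (σ₁ σ₂ : ℝ → ℝ) (hσ₁ : LipschitzWith 1 σ₁) (hσ₂ : LipschitzWith 1 σ₂)
    (Θ₁ : Matrix (Fin M) (Fin M₁) ℝ) (Θ₂ : Matrix (Fin M₁) (Fin M₂) ℝ)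
    (α : ℝ) (hα : 0 ≤ α)
    (hnoise : ∀ i, rowNorm (classMean y X - X) i ≤ α) :
    frob (Phi σ₁ σ₂ (classMean y X) (idealAdj y A) Θ₁ Θ₂ -
          Phi σ₁ σ₂ X (idealAdj y A) Θ₁ Θ₂)
      ≤ specNorm Θ₁ * specNorm Θ₂ * (α * Real.sqrt N) := by
  have hP := rowNormalize_mem_rowStochastic (idealAdj_nonneg (y := y) hA)
  have hrows : ∀ i, rowNorm (Phi σ₁ σ₂ (classMean y X) (idealAdj y A) Θ₁ Θ₂ -
      Phi σ₁ σ₂ X (idealAdj y A) Θ₁ Θ₂) i ≤ ‖Θ₂‖ * (‖Θ₁‖ * α) := by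
    simp only [Phi_eq_gcnLayer]
    exact rowNorm_gcnLayer_sub_le hσ₂ hP Θ₂ (rowNorm_gcnLayer_sub_le hσ₁ hP Θ₁ hnoise)
  calc _ ≤ ‖Θ₂‖ * (‖Θ₁‖ * α) * Real.sqrt N :=
        frob_le_mul_sqrt_of_rowNorm_le (by positivity) hrows
    _ = specNorm Θ₁ * specNorm Θ₂ * (α * Real.sqrt N) := by
        simp only [specNorm]
        ring

theorem two_layer_gnn_feature_noise_bound (N M M₁ M₂ C : ℕ) (y : Fin N → Fin C)
    (A : Matrix (Fin N) (Fin N) ℝ) (hA : ∀ i j, 0 ≤ A i j)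
    (X : Matrix (Fin N) (Fin M) ℝ)
    (σ₁ σ₂ : ℝ → ℝ) (hσ₁ : LipschitzWith 1 σ₁) (hσ₂ : LipschitzWith 1 σ₂)
    (Θ₁ : Matrix (Fin M) (Fin M₁) ℝ) (Θ₂ : Matrix (Fin M₁) (Fin M₂) ℝ)
    (α : ℝ) (hα : 0 ≤ α)
    (hrec : Recovers (classMean y X) y)
    (hnoise : ∀ i, rowNorm (classMean y X - X) i ≤ α) :
    frob (Phi σ₁ σ₂ (classMean y X) (idealAdj y A) Θ₁ Θ₂ -
          Phi σ₁ σ₂ X (idealAdj y A) Θ₁ Θ₂)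
      ≤ specNorm Θ₁ * specNorm Θ₂ * (α * Real.sqrt N) :=
  two_layer_gnn_feature_noise_bound_general N M M₁ M₂ C y A hA X σ₁ σ₂ hσ₁ hσ₂ Θ₁ Θ₂ α hα hnoise
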